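/- arXiv:1801.04444 — 2 statements merged into one kernel-verified Lean document; each statement's English description precedes it below -/
import Mathlib

section
/- Let k ≥ 2 be an even integer and m a nonnegative integer. Then Γ'(s+k)/Γ(s) = (-1)^{k-1} (k+m)!/m! · 1/(s+k+m) + O(1) as s → -(k+m); equivalently, lim_{s → -(k+m)} (s+k+m) · Γ'(s+k)/Γ(s) = (-1)^{k-1} (k+m)!/m!. -/
open Complex Filter Topology

private theorem aux_deriv_add_one (w : ℂ) (hw : ∀ j : ℕ, w ≠ -j) :
    deriv Gamma (w + 1) = Gamma w + w * deriv Gamma w := by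
  have hw0 : w ≠ 0 := by simpa using hw 0
  have h1 : (fun z : ℂ => Gamma (z + 1)) =ᶠ[𝓝 w] fun z => z * Gamma z := by
    filter_upwards [isOpen_ne.mem_nhds hw0] with z hz
    exact Gamma_add_one z hz
  have h2 : deriv (fun z : ℂ => Gamma (z + 1)) w = deriv Gamma (w + 1) := by
    simpa using deriv_comp_add_const Gamma 1 w
  rw [← h2, h1.deriv_eq, deriv_fun_mul (c := fun z : ℂ => z) differentiableAt_id (differentiableAt_Gamma w hw)]
  simp [mul_comm]

private theorem aux_Gamma_prod (z : ℂ) (hz : ∀ j : ℕ, z ≠ -j) (n : ℕ) :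
    Gamma (z + n) = Gamma z * ∏ i ∈ Finset.range n, (z + i) := by
  induction n with
  | zero => simp
  | succ n ih =>
    have hzn : z + n ≠ 0 := by
      intro h
      exact hz n (by linear_combination h)
    have : Gamma (z + (n + 1 : ℕ)) = (z + n) * Gamma (z + n) := by
      push_cast
      rw [show z + (n + 1 : ℂ) = (z + n) + 1 by ring, Gamma_add_one _ hzn]
    rw [this, ih, Finset.prod_range_succ]
    ring

private theorem aux_deriv_Gamma_prod (z : ℂ) (hz : ∀ j : ℕ, z ≠ -j) (n : ℕ) :
    deriv Gamma (z + n) =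
      (∏ i ∈ Finset.range n, (z + i)) * deriv Gamma z
        + Gamma (z + n) * ∑ i ∈ Finset.range n, (z + i)⁻¹ := by
  induction n with
  | zero => simp
  | succ n ih =>
    have hzn : ∀ j : ℕ, z + n ≠ -j := by
      intro j h
      exact hz (j + n) (by push_cast; linear_combination h)
    have hzn0 : z + n ≠ 0 := by simpa using hzn 0
    have h1 : deriv Gamma (z + (n + 1 : ℕ)) = Gamma (z + n) + (z + n) * deriv Gamma (z + n) := by
      push_cast
      rw [show z + ((n : ℂ) + 1) = (z + n) + 1 by ring]
      exact aux_deriv_add_one _ hzn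
    have h2 : Gamma (z + (n + 1 : ℕ)) = (z + n) * Gamma (z + n) := by
      push_cast
      rw [show z + ((n : ℂ) + 1) = (z + n) + 1 by ring, Gamma_add_one _ hzn0]
    rw [h1, ih, h2, Finset.prod_range_succ, Finset.sum_range_succ]
    field_simp
    ring

private theorem aux_contAt_derivGamma : ContinuousAt (deriv Gamma) 1 := by
  have hopen : IsOpen {z : ℂ | 0 < z.re} := isOpen_lt continuous_const continuous_re
  have hdiff : DifferentiableOn ℂ Gamma {z : ℂ | 0 < z.re} := by
    intro z hz
    refine (differentiableAt_Gamma z ?_).differentiableWithinAt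
    intro n h
    rw [h] at hz
    simp only [Set.mem_setOf_eq, neg_re, natCast_re] at hz
    have : (0:ℝ) ≤ n := n.cast_nonneg
    linarith
  have han : AnalyticOnNhd ℂ Gamma {z : ℂ | 0 < z.re} := hdiff.analyticOnNhd hopen
  exact ((han.deriv) 1 (by norm_num)).continuousAt

private theorem aux_mem (k m : ℕ) (s : ℂ) (hb : s ∈ Metric.ball (-((k:ℂ)+m)) (1/2))
    (hne : s ≠ -((k:ℂ)+m)) : ∀ j : ℕ, s ≠ -j := by
  intro j hj
  rw [Metric.mem_ball, Complex.dist_eq, hj] at hb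
  have hab : (j : ℤ) ≠ (k + m : ℤ) := by
    intro h
    apply hne
    rw [hj]
    have : (j : ℂ) = (k : ℂ) + m := by exact_mod_cast congrArg (fun n : ℤ => (n : ℂ)) h
    rw [this]
  have h1 : (1:ℤ) ≤ |((k + m : ℤ) - j : ℤ)| := Int.one_le_abs (by omega)
  have h2 : (-(j:ℂ)) - -((k:ℂ)+m) = (((k + m : ℤ) - j : ℤ) : ℂ) := by push_cast; ring
  rw [h2, Complex.norm_intCast] at hb
  have h1' : (1:ℝ) ≤ |(((k + m : ℤ) - j : ℤ) : ℝ)| := by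
    rw [← Int.cast_abs]; exact_mod_cast h1
  linarith

private theorem aux_nat_prod (m : ℕ) : ∀ k : ℕ,
    m.factorial * ∏ j ∈ Finset.range k, (m + 1 + j) = (k + m).factorial := by
  intro k
  induction k with
  | zero => simp
  | succ k ih =>
    rw [Finset.prod_range_succ, ← mul_assoc, ih, show k + 1 + m = (k + m) + 1 by ring,
      Nat.factorial_succ]
    ring

private theorem aux_value (k m : ℕ) (hk : 2 ≤ k) (hke : Even k) :
    -(∏ j ∈ Finset.range k, (-((k:ℂ)+m) + j)) =
      (-1) ^ (k - 1) * (Nat.factorial (k + m) : ℂ) / (Nat.factorial m : ℂ) := by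
  have h1 : ∏ j ∈ Finset.range k, (-((k:ℂ)+m) + j)
      = ∏ j ∈ Finset.range k, (-(((m + 1 + (k - 1 - j) : ℕ)) : ℂ)) := by
    refine Finset.prod_congr rfl fun j hj => ?_
    rw [Finset.mem_range] at hj
    have : (m + 1 + (k - 1 - j) : ℕ) = (k + m) - j := by omega
    rw [this, Nat.cast_sub (by omega)]
    push_cast
    ring
  rw [h1, Finset.prod_range_reflect (fun j => -(((m + 1 + j : ℕ)) : ℂ)) k]
  have h2 : ∏ j ∈ Finset.range k, (-(((m + 1 + j : ℕ)) : ℂ))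
      = (-1) ^ k * ((∏ j ∈ Finset.range k, (m + 1 + j) : ℕ) : ℂ) := by
    push_cast
    rw [show (-1:ℂ)^k = ∏ _j ∈ Finset.range k, (-1:ℂ) by simp, ← Finset.prod_mul_distrib]
    exact Finset.prod_congr rfl fun j _ => by ring
  rw [h2]
  have hke' : (-1 : ℂ) ^ k = 1 := hke.neg_one_pow
  have hko : Odd (k - 1) := Nat.Even.sub_odd (by omega) hke odd_one
  have hm : (Nat.factorial m : ℂ) ≠ 0 := Nat.cast_ne_zero.mpr m.factorial_ne_zero
  rw [hke', hko.neg_one_pow, eq_div_iff hm]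
  have := congrArg (fun n : ℕ => (n : ℂ)) (aux_nat_prod m k)
  push_cast at this ⊢
  linear_combination -this

/-- For even `k ≥ 2` and `m ∈ ℕ₀`, `Γ'(s+k)/Γ(s)` has a simple pole at `s = -(k+m)` with
`lim_{s → -(k+m)} (s+k+m) · Γ'(s+k)/Γ(s) = (-1)^{k-1} (k+m)!/m!`. -/
theorem gammaDeriv_div_gamma_pole (k m : ℕ) (hk : 2 ≤ k) (hke : Even k) :
    Filter.Tendsto
      (fun s : ℂ => (s + k + m) * (deriv Complex.Gamma (s + k) / Complex.Gamma s))
      (𝓝[≠] (-((k : ℂ) + m)))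
      (𝓝 ((-1) ^ (k - 1) * (Nat.factorial (k + m) : ℂ) / (Nat.factorial m : ℂ))) := by
  set c : ℂ := -((k : ℂ) + m) with hc
  set g : ℂ → ℂ := fun s => (∏ j ∈ Finset.range k, (s + j)) *
      ((s + k + m) * deriv Gamma (s + k + m + 1) / Gamma (s + k + m + 1) - 1 -
        (s + k + m) * ∑ i ∈ Finset.range m, (s + k + i)⁻¹) with hg
  -- Step A : eventual equality
  have hev : ∀ᶠ s in 𝓝[≠] c,
      (s + k + m) * (deriv Gamma (s + k) / Gamma s) = g s := by
    have hball : Metric.ball c (1/2) ∈ 𝓝[≠] c :=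
      nhdsWithin_le_nhds (Metric.ball_mem_nhds c (by norm_num))
    filter_upwards [hball, self_mem_nhdsWithin] with s hb hne'
    have hne : s ≠ c := hne'
    have hs : ∀ j : ℕ, s ≠ -j := aux_mem k m s hb hne
    have hz : ∀ j : ℕ, s + k ≠ -j := by
      intro j h
      exact hs (k + j) (by push_cast; linear_combination h)
    have hε : s + (k:ℂ) + m ≠ 0 := by
      intro h
      exact hne (by rw [hc]; linear_combination h)
    have hΓs : Gamma s ≠ 0 := Gamma_ne_zero hs
    have hA : (∏ j ∈ Finset.range k, (s + (j:ℂ))) ≠ 0 := by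
      refine Finset.prod_ne_zero_iff.mpr fun j _ h => hs j (by linear_combination h)
    have hR : (∏ i ∈ Finset.range (m+1), (s + k + (i:ℂ))) ≠ 0 := by
      refine Finset.prod_ne_zero_iff.mpr fun i _ h => hz i (by linear_combination h)
    have hG : Gamma (s + k + m + 1) ≠ 0 := by
      refine Gamma_ne_zero fun j h => hs (j + (k + m + 1)) ?_
      push_cast
      linear_combination h
    -- Gamma recurrence
    have e1 := aux_Gamma_prod s hs (k + m + 1)
    push_cast at e1
    rw [show s + ((k:ℂ) + (m:ℂ) + 1) = s + k + m + 1 by ring] at e1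
    have e3 : (∏ j ∈ Finset.range (k + m + 1), (s + (j:ℂ)))
        = (∏ j ∈ Finset.range k, (s + (j:ℂ))) *
            ∏ i ∈ Finset.range (m+1), (s + k + (i:ℂ)) := by
      have : k + m + 1 = k + (m + 1) := by omega
      rw [this, Finset.prod_range_add]
      congr 1
      exact Finset.prod_congr rfl fun i _ => by push_cast; ring
    rw [e3] at e1
    -- deriv recurrence
    have e2 := aux_deriv_Gamma_prod (s + k) hz (m + 1)
    push_cast at e2
    rw [show s + (k:ℂ) + ((m:ℂ) + 1) = s + k + m + 1 by ring] at e2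
    rw [Finset.sum_range_succ] at e2
    -- abbreviations
    set A := ∏ j ∈ Finset.range k, (s + (j:ℂ))
    set R := ∏ i ∈ Finset.range (m+1), (s + k + (i:ℂ))
    set D := deriv Gamma (s + k + m + 1)
    set G := Gamma (s + k + m + 1)
    set T := ∑ i ∈ Finset.range m, (s + k + (i:ℂ))⁻¹
    -- e1 : G = Gamma s * (A * R),  e2 : D = R * deriv Gamma (s+k) + G * (T + (s+k+m)⁻¹)
    have hΓs_eq : Gamma s = G / (A * R) := by
      rw [eq_div_iff (mul_ne_zero hA hR), e1]
    have hd_eq : deriv Gamma (s + k) = (D - G * (T + (s + k + m)⁻¹)) / R := by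
      rw [eq_div_iff hR, e2]
      ring
    have key : ∀ D G T A R e : ℂ, G ≠ 0 → R ≠ 0 → e ≠ 0 → A ≠ 0 →
        e * (((D - G * (T + e⁻¹)) / R) / (G / (A * R))) = A * (e * D / G - 1 - e * T) := by
      intros D G T A R e hG hR he hA
      field_simp
      ring
    rw [hg, hd_eq, hΓs_eq]
    exact key D G T A R (s + k + m) hG hR hε hA
  -- Step B : limit of g
  have hpt : c + (k:ℂ) + m + 1 = 1 := by rw [hc]; ring
  have hpt0 : c + (k:ℂ) + m = 0 := by rw [hc]; ring
  have hinner : Tendsto (fun s : ℂ => s + k + m + 1) (𝓝 c) (𝓝 (1:ℂ)) := by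
    have h := Continuous.tendsto (show Continuous (fun s : ℂ => s + k + m + 1) by fun_prop) c
    rwa [hpt] at h
  have hD : Tendsto (fun s : ℂ => deriv Gamma (s + k + m + 1)) (𝓝 c) (𝓝 (deriv Gamma 1)) :=
    Filter.Tendsto.comp aux_contAt_derivGamma hinner
  have hΓ1 : ContinuousAt Gamma 1 := by
    refine (differentiableAt_Gamma 1 fun n h => ?_).continuousAt
    have := congrArg Complex.re h
    simp only [Complex.one_re, Complex.neg_re, Complex.natCast_re] at this
    have : (0:ℝ) ≤ n := n.cast_nonneg
    linarith [congrArg Complex.re h, Complex.natCast_re n]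
  have hGam : Tendsto (fun s : ℂ => Gamma (s + k + m + 1)) (𝓝 c) (𝓝 (1:ℂ)) := by
    have h := Filter.Tendsto.comp hΓ1 hinner
    rwa [Gamma_one] at h
  have hεt : Tendsto (fun s : ℂ => s + k + m) (𝓝 c) (𝓝 (0:ℂ)) := by
    have h := Continuous.tendsto (show Continuous (fun s : ℂ => s + k + m) by fun_prop) c
    rwa [hpt0] at h
  have hAt : Tendsto (fun s : ℂ => ∏ j ∈ Finset.range k, (s + (j:ℂ))) (𝓝 c)
      (𝓝 (∏ j ∈ Finset.range k, (c + (j:ℂ)))) :=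
    tendsto_finset_prod _ fun j _ => (continuous_id.add continuous_const).tendsto c
  have hTt : Tendsto (fun s : ℂ => ∑ i ∈ Finset.range m, (s + k + (i:ℂ))⁻¹) (𝓝 c)
      (𝓝 (∑ i ∈ Finset.range m, (c + k + (i:ℂ))⁻¹)) := by
    refine tendsto_finset_sum _ fun i hi => ?_
    refine Tendsto.inv₀ (((continuous_id.add continuous_const).add continuous_const).tendsto c) ?_
    rw [Finset.mem_range] at hi
    intro h
    rw [hc] at h
    have : (i:ℂ) = (m:ℂ) := by linear_combination h
    exact absurd (Nat.cast_injective this) (by omega)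
  have hgt : Tendsto g (𝓝 c)
      (𝓝 ((∏ j ∈ Finset.range k, (c + (j:ℂ))) *
        ((0:ℂ) * deriv Gamma 1 / 1 - 1 - 0 * ∑ i ∈ Finset.range m, (c + k + (i:ℂ))⁻¹))) := by
    rw [hg]
    exact hAt.mul ((((hεt.mul hD).div hGam one_ne_zero).sub tendsto_const_nhds).sub (hεt.mul hTt))
  have hval : (∏ j ∈ Finset.range k, (c + (j:ℂ))) *
        ((0:ℂ) * deriv Gamma 1 / 1 - 1 - 0 * ∑ i ∈ Finset.range m, (c + k + (i:ℂ))⁻¹)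
      = (-1) ^ (k - 1) * (Nat.factorial (k + m) : ℂ) / (Nat.factorial m : ℂ) := by
    rw [← aux_value k m hk hke, hc]
    ring
  rw [hval] at hgt
  exact Tendsto.congr' (hev.mono fun s h => h.symm) (hgt.mono_left nhdsWithin_le_nhds)
end

section
/- Let m, n be nonnegative integers with m+n even. Then lim_{s₂ → -n} binom(-s₂, m+n+1) · ζ(s₂+n+1) = (-1)^{m-1} m! n! / (m+n+1)!, where binom(-s₂, m+n+1) = (-s₂)(-s₂-1)⋯(-s₂-m-n)/(m+n+1)!. -/
open Complex Filter Topology Finset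

lemma prod0 (m : ℕ) : ∏ k ∈ Finset.range m, ((k : ℂ) + 1) = Nat.factorial m := by
  induction m with
  | zero => simp
  | succ m ih => rw [Finset.prod_range_succ, ih, Nat.factorial_succ]; push_cast; ring

lemma prodneg (m : ℕ) : ∏ k ∈ Finset.range m, (-((k : ℂ) + 1)) =
    (-1) ^ m * Nat.factorial m := by
  induction m with
  | zero => simp
  | succ m ih => rw [Finset.prod_range_succ, ih, Nat.factorial_succ]; push_cast; ring

lemma prod1 (n : ℕ) : ∏ j ∈ Finset.range n, ((n : ℂ) - j) = Nat.factorial n := by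
  induction n with
  | zero => simp
  | succ n ih =>
    rw [Finset.prod_range_succ']
    have : ∀ i ∈ Finset.range n, ((n + 1 : ℕ) : ℂ) - ((i + 1 : ℕ) : ℂ) = (n : ℂ) - i := by
      intro i _; push_cast; ring
    rw [Finset.prod_congr rfl this, ih, Nat.factorial_succ]
    push_cast; ring

lemma prod2 (n m : ℕ) : ∏ j ∈ Finset.Ico (n + 1) (m + n + 1), ((n : ℂ) - j) =
    (-1) ^ m * Nat.factorial m := by
  rw [Finset.prod_Ico_eq_prod_range]
  have hc : m + n + 1 - (n + 1) = m := by omega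
  rw [hc]
  have : ∀ k ∈ Finset.range m, ((n : ℂ) - ((n + 1 + k : ℕ) : ℂ)) = -((k : ℂ) + 1) := by
    intro k _; push_cast; ring
  rw [Finset.prod_congr rfl this, prodneg]

/-- For `m, n ∈ ℕ₀` with `m+n` even,
`lim_{s₂ → -n} binom(-s₂, m+n+1) · ζ(s₂+n+1) = (-1)^{m-1} m! n!/(m+n+1)!`, where
`binom(w, r) = w(w-1)⋯(w-r+1)/r!` is the generalized binomial coefficient. -/
theorem binom_zeta_limit (m n : ℕ) (h : Even (m + n)) :
    Filter.Tendsto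
      (fun s₂ : ℂ =>
        ((∏ j ∈ Finset.range (m + n + 1), (-s₂ - j)) / (Nat.factorial (m + n + 1) : ℂ)) *
          riemannZeta (s₂ + n + 1))
      (𝓝[≠] (-(n : ℂ)))
      (𝓝 ((-1 : ℂ) ^ (m + 1) * (Nat.factorial m : ℂ) * (Nat.factorial n : ℂ) /
        (Nat.factorial (m + n + 1) : ℂ))) := by
  set P : ℂ → ℂ := fun s => ∏ j ∈ (Finset.range (m + n + 1)).erase n, (-s - (j : ℂ)) with hP
  have hmem : n ∈ Finset.range (m + n + 1) := by simp
  -- limit of P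
  have hPc : Continuous P := continuous_finset_prod _ fun j _ => by fun_prop
  have h1 : Tendsto P (𝓝[≠] (-(n : ℂ))) (𝓝 (P (-(n : ℂ)))) :=
    (hPc.tendsto _).mono_left nhdsWithin_le_nhds
  -- limit of (s+n) * ζ(s+n+1)
  have hφ : Tendsto (fun s : ℂ => s + n + 1) (𝓝[≠] (-(n : ℂ))) (𝓝[≠] (1 : ℂ)) := by
    rw [tendsto_nhdsWithin_iff]
    constructor
    · have : Tendsto (fun s : ℂ => s + n + 1) (𝓝 (-(n : ℂ))) (𝓝 ((-(n : ℂ)) + n + 1)) :=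
        Continuous.tendsto (by fun_prop) _
      simpa using this.mono_left nhdsWithin_le_nhds
    · filter_upwards [self_mem_nhdsWithin] with s hs
      simp only [Set.mem_compl_iff, Set.mem_singleton_iff] at hs ⊢
      intro hc
      apply hs
      have : s = -(n : ℂ) := by linear_combination hc
      exact this
  have h2 : Tendsto (fun s : ℂ => (s + n) * riemannZeta (s + n + 1)) (𝓝[≠] (-(n : ℂ)))
      (𝓝 1) := by
    have := riemannZeta_residue_one.comp hφ
    refine this.congr fun s => ?_
    simp only [Function.comp]
    ring_nf
  -- combine
  have h3 : Tendsto (fun s : ℂ => -(P s * ((s + n) * riemannZeta (s + n + 1))) /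
      (Nat.factorial (m + n + 1) : ℂ)) (𝓝[≠] (-(n : ℂ)))
      (𝓝 (-(P (-(n : ℂ)) * 1) / (Nat.factorial (m + n + 1) : ℂ))) :=
    ((h1.mul h2).neg).div_const _
  -- compute P(-n)
  have hset : (Finset.range (m + n + 1)).erase n =
      Finset.range n ∪ Finset.Ico (n + 1) (m + n + 1) := by
    ext x
    simp only [Finset.mem_erase, Finset.mem_range, Finset.mem_union, Finset.mem_Ico]
    omega
  have hdisj : Disjoint (Finset.range n) (Finset.Ico (n + 1) (m + n + 1)) := by
    simp only [Finset.disjoint_left, Finset.mem_range, Finset.mem_Ico]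
    omega
  have hPval : P (-(n : ℂ)) = (Nat.factorial n : ℂ) * ((-1) ^ m * Nat.factorial m) := by
    rw [hP]
    simp only [neg_neg]
    rw [hset, Finset.prod_union hdisj]
    have e1 : ∀ j ∈ Finset.range n, ((n : ℂ) - (j : ℂ)) = (n : ℂ) - j := fun _ _ => rfl
    rw [prod1, prod2]
  -- finish
  have heq : ∀ s : ℂ,
      ((∏ j ∈ Finset.range (m + n + 1), (-s - j)) / (Nat.factorial (m + n + 1) : ℂ)) *
        riemannZeta (s + n + 1) =
      -(P s * ((s + n) * riemannZeta (s + n + 1))) / (Nat.factorial (m + n + 1) : ℂ) := by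
    intro s
    rw [← Finset.mul_prod_erase _ _ hmem]
    simp only [hP]
    ring
  have hmain := h3.congr fun s => (heq s).symm
  convert hmain using 2
  rw [hPval]
  ring
end
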